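/- Let Γ be a finite set of reals and define, for x > 0, F(x) = ∑_{γ,γ'∈Γ} x^{i(γ−γ')}·w(γ−γ') with w(u) = 4/(4+u²). Then F(x) is a real number and F(x) ≥ 0 for every x > 0. -/

import Mathlib

/-!
The weight `w(u) = 4 / (4 + u²)` is the Fourier transform of the positive integrable function
`e^{-2|t|}`. Writing each `w(γ - γ')` as that integral and `x^{i(γ - γ')} = x^{iγ} · conj x^{iγ'}`,
the double sum becomes `∫ e^{-2|t|} |∑_γ x^{iγ} e^{iγt}|² dt`, a nonnegative real number.
-/

open Real Finset Complex

open MeasureTheory Set ComplexConjugate ComplexOrder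

theorem integrable_exp_neg_mul_abs {a : ℝ} (ha : 0 < a) :
    Integrable fun t : ℝ ↦ Real.exp (-a * |t|) := by
  have hIic : IntegrableOn (fun t : ℝ ↦ Real.exp (-a * |t|)) (Iic 0) :=
    (integrableOn_exp_mul_Iic ha 0).congr_fun
      (fun t (ht : t ≤ 0) ↦ by rw [abs_of_nonpos ht, neg_mul_neg]) measurableSet_Iic
  have hIoi : IntegrableOn (fun t : ℝ ↦ Real.exp (-a * |t|)) (Ioi 0) :=
    (integrableOn_exp_mul_Ioi (neg_neg_of_pos ha) 0).congr_fun
      (fun t (ht : 0 < t) ↦ by rw [abs_of_pos ht]) measurableSet_Ioi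
  rw [← integrableOn_univ, ← Iic_union_Ioi (a := (0 : ℝ))]
  exact hIic.union hIoi

theorem integral_exp_neg_mul_abs_mul_cexp {a : ℝ} (ha : 0 < a) (u : ℝ) :
    ∫ t : ℝ, (Real.exp (-a * |t|) : ℂ) * cexp (I * u * t) = 2 * a / (a ^ 2 + u ^ 2) := by
  set f : ℝ → ℂ := fun t ↦ (Real.exp (-a * |t|) : ℂ) * cexp (I * u * t)
  have hIic : EqOn f (fun t : ℝ ↦ cexp ((a + I * u) * t)) (Iic 0) := fun t (ht : t ≤ 0) ↦ by
    simp only [f, abs_of_nonpos ht, ofReal_exp, ← Complex.exp_add]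
    push_cast
    ring_nf
  have hIoi : EqOn f (fun t : ℝ ↦ cexp ((-a + I * u) * t)) (Ioi 0) := fun t (ht : 0 < t) ↦ by
    simp only [f, abs_of_pos ht, ofReal_exp, ← Complex.exp_add]
    push_cast
    ring_nf
  have hre_pos : (0 : ℝ) < (a + I * u).re := by simpa using ha
  have hre_neg : (-a + I * u).re < 0 := by simpa using ha
  rw [← intervalIntegral.integral_Iic_add_Ioi
      ((integrableOn_exp_mul_complex_Iic hre_pos 0).congr_fun hIic.symm measurableSet_Iic)
      ((integrableOn_exp_mul_complex_Ioi hre_neg 0).congr_fun hIoi.symm measurableSet_Ioi),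
    setIntegral_congr_fun measurableSet_Iic hIic, setIntegral_congr_fun measurableSet_Ioi hIoi,
    integral_exp_mul_complex_Iic hre_pos, integral_exp_mul_complex_Ioi hre_neg]
  have h₁ : (a : ℂ) + I * u ≠ 0 := fun h ↦ by simpa [ha.ne'] using congrArg re h
  have h₂ : -(a : ℂ) + I * u ≠ 0 := fun h ↦ by simpa [ha.ne'] using congrArg re h
  have h₃ : (a : ℂ) ^ 2 + u ^ 2 ≠ 0 := by exact_mod_cast (by positivity : a ^ 2 + u ^ 2 ≠ 0)
  simp only [ofReal_zero, mul_zero, Complex.exp_zero]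
  field_simp
  ring_nf
  rw [I_sq]
  ring

theorem integrable_ofReal_mul_cexp_I_mul {ρ : ℝ → ℝ} (hρ : Integrable ρ) (u : ℝ) :
    Integrable fun t : ℝ ↦ (ρ t : ℂ) * cexp (I * u * t) :=
  hρ.ofReal.mul_bdd (by fun_prop) (.of_forall fun t ↦ by
    rw [mul_assoc, ← ofReal_mul, norm_exp_I_mul_ofReal])

theorem cexp_I_mul_sub_mul (γ γ' t : ℝ) :
    cexp (I * (γ - γ') * t) = cexp (I * γ * t) * conj (cexp (I * γ' * t)) := by
  rw [← Complex.exp_conj]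
  simp only [map_mul, conj_I, conj_ofReal]
  rw [← Complex.exp_add]
  ring_nf

/-- The easy direction of Bochner's theorem: the Fourier transform of a nonnegative integrable
function is a positive definite function. -/
theorem sum_sum_mul_conj_mul_integral_nonneg (s : Finset ℝ) (c : ℝ → ℂ) {ρ : ℝ → ℝ}
    (hρ : Integrable ρ) (hρ₀ : 0 ≤ ρ) :
    0 ≤ ∑ γ ∈ s, ∑ γ' ∈ s, c γ * conj (c γ') * ∫ t, (ρ t : ℂ) * cexp (I * (γ - γ') * t) := by
  have hint (γ γ' : ℝ) : Integrable fun t : ℝ ↦ (ρ t : ℂ) * cexp (I * (γ - γ') * t) := by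
    simpa using integrable_ofReal_mul_cexp_I_mul hρ (γ - γ')
  set S : ℝ → ℂ := fun t ↦ ∑ γ ∈ s, c γ * cexp (I * γ * t)
  calc (0 : ℂ) ≤ ((∫ t, ρ t * normSq (S t) : ℝ) : ℂ) :=
        zero_le_real.2 (integral_nonneg fun t ↦ mul_nonneg (hρ₀ t) (normSq_nonneg _))
    _ = ∫ t, (ρ t : ℂ) * (S t * conj (S t)) := by
        rw [← integral_complex_ofReal]
        simp only [ofReal_mul, mul_conj]
    _ = ∫ t, ∑ γ ∈ s, ∑ γ' ∈ s, c γ * conj (c γ') * ((ρ t : ℂ) * cexp (I * (γ - γ') * t)) := by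
        congr 1
        ext t
        rw [map_sum, sum_mul_sum, mul_sum]
        refine sum_congr rfl fun γ _ ↦ ?_
        rw [mul_sum]
        refine sum_congr rfl fun γ' _ ↦ ?_
        rw [cexp_I_mul_sub_mul, map_mul]
        ring
    _ = _ := by
        rw [integral_finsetSum _ fun γ _ ↦ integrable_finsetSum _ fun γ' _ ↦
          (hint γ γ').const_mul _]
        refine sum_congr rfl fun γ _ ↦ ?_
        rw [integral_finsetSum _ fun γ' _ ↦ (hint γ γ').const_mul _]
        simp only [integral_const_mul]

theorem F_real_nonneg_general (Γ : Finset ℝ) (x : ℝ) :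
    (∑ γ ∈ Γ, ∑ γ' ∈ Γ,
        Complex.exp (Complex.I * ((γ : ℂ) - (γ' : ℂ)) * Real.log x)
          * (4 / (4 + ((γ : ℂ) - (γ' : ℂ)) ^ 2))).im = 0 ∧
    0 ≤ (∑ γ ∈ Γ, ∑ γ' ∈ Γ,
        Complex.exp (Complex.I * ((γ : ℂ) - (γ' : ℂ)) * Real.log x)
          * (4 / (4 + ((γ : ℂ) - (γ' : ℂ)) ^ 2))).re := by
  have hw (u : ℝ) :
      4 / (4 + (u : ℂ) ^ 2) = ∫ t : ℝ, (Real.exp (-2 * |t|) : ℂ) * cexp (I * u * t) := by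
    rw [integral_exp_neg_mul_abs_mul_cexp two_pos]
    norm_num
  have hterm (γ γ' : ℝ) :
      cexp (I * (γ - γ') * Real.log x) * (4 / (4 + ((γ : ℂ) - γ') ^ 2)) =
        cexp (I * γ * Real.log x) * conj (cexp (I * γ' * Real.log x)) *
          ∫ t : ℝ, (Real.exp (-2 * |t|) : ℂ) * cexp (I * (γ - γ') * t) := by
    rw [cexp_I_mul_sub_mul, ← ofReal_sub, hw]
  simp only [hterm]
  have hpos := sum_sum_mul_conj_mul_integral_nonneg Γ (fun γ ↦ cexp (I * γ * Real.log x))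
    (integrable_exp_neg_mul_abs two_pos) fun t ↦ (Real.exp_pos _).le
  obtain ⟨hre, him⟩ := Complex.nonneg_iff.1 hpos
  exact ⟨him.symm, hre⟩

theorem F_real_nonneg (Γ : Finset ℝ) (x : ℝ) (hx : 0 < x) :
    (∑ γ ∈ Γ, ∑ γ' ∈ Γ,
        Complex.exp (Complex.I * ((γ : ℂ) - (γ' : ℂ)) * Real.log x)
          * (4 / (4 + ((γ : ℂ) - (γ' : ℂ)) ^ 2))).im = 0 ∧
    0 ≤ (∑ γ ∈ Γ, ∑ γ' ∈ Γ,
        Complex.exp (Complex.I * ((γ : ℂ) - (γ' : ℂ)) * Real.log x)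
          * (4 / (4 + ((γ : ℂ) - (γ' : ℂ)) ^ 2))).re :=
  F_real_nonneg_general Γ x
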